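/- Suppose for each j = 1,...,L the joint distribution of (V₁ʲ, V₂ʲ, V₃ʲ) is a common convex combination ∑_i p_i (a_j^{(i)} ⊗ b_j^{(i)} ⊗ c_j^{(i)}) of triple product distributions (same weights for all j). If for every i the single-system sums satisfy ∑_j H(a_j^{(i)}) ≥ f₁, ∑_j H(b_j^{(i)}) ≥ f₂, ∑_j H(c_j^{(i)}) ≥ f₃, and the mixed first marginals satisfy ∑_j H(V₁ʲ) ≥ f₁, then ∑_{j=1}^L H(V₁ʲ, V₂ʲ, V₃ʲ) ≥ f₁ + f₂ + f₃. -/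

import Mathlib

open Finset

/-- Shannon entropy (in bits) of a finitely supported distribution. -/
noncomputable def shannon {α : Type*} [Fintype α] (p : α → ℝ) : ℝ :=
  -∑ a, p a * Real.logb 2 (p a)

/-!
Entropy is additive on product distributions and concave, so the entropy of each joint
distribution `P j` dominates the `lam`-average of `H(a i j) + H(b i j) + H(c i j)`. Summing over
`j` and applying the three uncertainty bounds inside the average gives `f1 + f2 + f3`.
-/

section Shannon

variable {α β ι : Type*} [Fintype α] [Fintype β]

lemma shannon_eq_sum_negMulLog_div (p : α → ℝ) :
    shannon p = (∑ x, Real.negMulLog (p x)) / Real.log 2 := by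
  simp only [shannon, Real.logb, Real.negMulLog, Finset.sum_div, ← Finset.sum_neg_distrib]
  congr 1; ext x; ring

lemma shannon_prod_mul (p : α → ℝ) (q : β → ℝ) (hp : ∑ x, p x = 1) (hq : ∑ y, q y = 1) :
    shannon (fun w : α × β => p w.1 * q w.2) = shannon p + shannon q := by
  simp only [shannon_eq_sum_negMulLog_div, Fintype.sum_prod_type, Real.negMulLog_mul,
    Finset.sum_add_distrib, ← Finset.sum_mul, ← Finset.mul_sum, hp, hq]
  ring

lemma sum_mul_shannon_le_shannon_sum (s : Finset ι) (w : ι → ℝ) (p : ι → α → ℝ)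
    (hw0 : ∀ i ∈ s, 0 ≤ w i) (hw1 : ∑ i ∈ s, w i = 1) (hp : ∀ i ∈ s, ∀ x, 0 ≤ p i x) :
    ∑ i ∈ s, w i * shannon (p i) ≤ shannon (fun x => ∑ i ∈ s, w i * p i x) := by
  simp only [shannon_eq_sum_negMulLog_div, ← mul_div_assoc, ← Finset.sum_div]
  refine div_le_div_of_nonneg_right ?_ (Real.log_nonneg one_le_two)
  simp only [Finset.mul_sum]
  rw [Finset.sum_comm]
  refine Finset.sum_le_sum fun x _ => ?_
  simpa only [smul_eq_mul] using
    Real.concaveOn_negMulLog.le_map_sum hw0 hw1 fun i hi => hp i hi x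

end Shannon

theorem stmt_16_general {X Y Z J : Type*} [Fintype X] [Fintype Y] [Fintype Z] [Fintype J] (L : ℕ)
    (lam : J → ℝ) (hlam0 : ∀ j, 0 ≤ lam j) (hlam1 : ∑ j, lam j = 1)
    (a : J → Fin L → X → ℝ) (b : J → Fin L → Y → ℝ) (c : J → Fin L → Z → ℝ)
    (ha0 : ∀ i j x, 0 ≤ a i j x) (ha1 : ∀ i j, ∑ x, a i j x = 1)
    (hb0 : ∀ i j y, 0 ≤ b i j y) (hb1 : ∀ i j, ∑ y, b i j y = 1)
    (hc0 : ∀ i j z, 0 ≤ c i j z) (hc1 : ∀ i j, ∑ z, c i j z = 1)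
    (P : Fin L → X × Y × Z → ℝ)
    (hP : ∀ j w, P j w = ∑ i, lam i * (a i j w.1 * (b i j w.2.1 * c i j w.2.2)))
    (f1 f2 f3 : ℝ)
    (hf1 : ∀ i, f1 ≤ ∑ j, shannon (a i j))
    (hf2 : ∀ i, f2 ≤ ∑ j, shannon (b i j))
    (hf3 : ∀ i, f3 ≤ ∑ j, shannon (c i j)) :
    f1 + f2 + f3 ≤ ∑ j, shannon (P j) := by
  have hproduct : ∀ i j, shannon (fun w : X × Y × Z => a i j w.1 * (b i j w.2.1 * c i j w.2.2)) =
      shannon (a i j) + shannon (b i j) + shannon (c i j) := fun i j => by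
    have hbc : ∑ v : Y × Z, b i j v.1 * c i j v.2 = 1 := by
      simp only [Fintype.sum_prod_type, ← Finset.mul_sum, hc1, mul_one, hb1]
    rw [shannon_prod_mul (a i j) _ (ha1 i j) hbc, shannon_prod_mul _ _ (hb1 i j) (hc1 i j),
      add_assoc]
  have hconcave : ∀ j, ∑ i, lam i * (shannon (a i j) + shannon (b i j) + shannon (c i j)) ≤
      shannon (P j) := fun j => by
    simp only [← hproduct, funext (hP j)]
    exact sum_mul_shannon_le_shannon_sum _ _ _ (fun i _ => hlam0 i) hlam1 fun i _ w =>
      mul_nonneg (ha0 i j _) (mul_nonneg (hb0 i j _) (hc0 i j _))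
  calc f1 + f2 + f3 = ∑ i, lam i * (f1 + f2 + f3) := by rw [← Finset.sum_mul, hlam1, one_mul]
    _ ≤ ∑ i, lam i * ∑ j, (shannon (a i j) + shannon (b i j) + shannon (c i j)) := by
      refine Finset.sum_le_sum fun i _ => mul_le_mul_of_nonneg_left ?_ (hlam0 i)
      simp only [Finset.sum_add_distrib]
      linarith [hf1 i, hf2 i, hf3 i]
    _ = ∑ j, ∑ i, lam i * (shannon (a i j) + shannon (b i j) + shannon (c i j)) := by
      simp only [Finset.mul_sum]; exact Finset.sum_comm
    _ ≤ ∑ j, shannon (P j) := Finset.sum_le_sum fun j _ => hconcave j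

theorem stmt_16 {X Y Z J : Type*} [Fintype X] [Fintype Y] [Fintype Z] [Fintype J] (L : ℕ)
    (lam : J → ℝ) (hlam0 : ∀ j, 0 ≤ lam j) (hlam1 : ∑ j, lam j = 1)
    (a : J → Fin L → X → ℝ) (b : J → Fin L → Y → ℝ) (c : J → Fin L → Z → ℝ)
    (ha0 : ∀ i j x, 0 ≤ a i j x) (ha1 : ∀ i j, ∑ x, a i j x = 1)
    (hb0 : ∀ i j y, 0 ≤ b i j y) (hb1 : ∀ i j, ∑ y, b i j y = 1)
    (hc0 : ∀ i j z, 0 ≤ c i j z) (hc1 : ∀ i j, ∑ z, c i j z = 1)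
    (P : Fin L → X × Y × Z → ℝ)
    (hP : ∀ j w, P j w = ∑ i, lam i * (a i j w.1 * (b i j w.2.1 * c i j w.2.2)))
    (f1 f2 f3 : ℝ)
    (hf1 : ∀ i, f1 ≤ ∑ j, shannon (a i j))
    (hf2 : ∀ i, f2 ≤ ∑ j, shannon (b i j))
    (hf3 : ∀ i, f3 ≤ ∑ j, shannon (c i j))
    (hV1 : f1 ≤ ∑ j, shannon (fun x => ∑ w : Y × Z, P j (x, w))) :
    f1 + f2 + f3 ≤ ∑ j, shannon (P j) :=
  stmt_16_general L lam hlam0 hlam1 a b c ha0 ha1 hb0 hb1 hc0 hc1 P hP f1 f2 f3 hf1 hf2 hf3
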